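/- For every ε ∈ Σ'' with ε₀ ≠ 1, the points J_r(ε) and J_r(σ̂(ε)) both lie in [0,1)², and the semiconjugacy identity J_r(σ̂(ε)) = B̂_r(J_r(ε)) holds. -/

import Mathlib

open MeasureTheory
open scoped ENNReal

/-- The two-sided shift on `Σ = {0,1,2}^ℤ`. -/
def shiftMap (ε : ℤ → Fin 3) : ℤ → Fin 3 := fun n => ε (n + 1)

/-- The partition points `α₀ = 0`, `α₁ = r₀`, `α₂ = r₀ + r₁`. -/
def alphaOf (r : Fin 3 → ℝ) : Fin 3 → ℝ := ![0, r 0, r 0 + r 1]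

/-- The closed baker's map `B̂_r` on the square `[0,1)²` (extended arbitrarily to `ℝ²`):
`(q,p)` with `q ∈ [α_ε, α_ε + r_ε)` is mapped to `((q-α_ε)/r_ε, r_ε p + α_ε)`. -/
noncomputable def bakerMap (r : Fin 3 → ℝ) : ℝ × ℝ → ℝ × ℝ := fun x =>
  if x.1 < r 0 then (x.1 / r 0, r 0 * x.2)
  else if x.1 < r 0 + r 1 then ((x.1 - r 0) / r 1, r 1 * x.2 + r 0)
  else ((x.1 - (r 0 + r 1)) / r 2, r 2 * x.2 + (r 0 + r 1))

/-- The coding map `J_r : Σ → [0,1]²`. -/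
noncomputable def codingMap (r : Fin 3 → ℝ) (ε : ℤ → Fin 3) : ℝ × ℝ :=
  (∑' k : ℕ, (∏ i ∈ Finset.range k, r (ε (i : ℤ))) * alphaOf r (ε (k : ℤ)),
   ∑' k : ℕ, (∏ i ∈ Finset.range k, r (ε (-(i + 1) : ℤ))) * alphaOf r (ε (-(k + 1) : ℤ)))

/-- The unit square `[0,1) × [0,1)`. -/
def unitSquare : Set (ℝ × ℝ) := Set.Ico 0 1 ×ˢ Set.Ico 0 1

/-- The complement `Σ \ Σ''` of the good set `Σ''`. -/
def badSet : Set (ℤ → Fin 3) :=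
  {ε | (∀ n : ℤ, n ≤ -1 → ε n = 2) ∧ ε 0 ≠ 1} ∪ {ε | ∀ n : ℤ, 1 ≤ n → ε n = 2}

/-!
Both coordinates of `J_r` are one-sided digit expansions
`x(a) = α_{a₀} + r_{a₀} α_{a₁} + r_{a₀} r_{a₁} α_{a₂} + ⋯`, which satisfy
`x(a) = α_{a₀} + r_{a₀} x(a₁ a₂ ⋯)` and lie in `[0,1]`, with `x(a) < 1` as soon as some digit
differs from `2` (the expansion `222⋯` is the only one reaching `1`). The shift moves the digit
`ε₀` from the future `q`-expansion to the past `p`-expansion, so with `q' = q(σ̂ε)` we get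
`q(ε) = α_{ε₀} + r_{ε₀} q'` and `p(σ̂ε) = α_{ε₀} + r_{ε₀} p(ε)`. Since `q' ∈ [0,1)`, the point
`q(ε)` lies in the branch `[α_{ε₀}, α_{ε₀} + r_{ε₀})`, on which `B̂_r` undoes exactly this.
Removing `Σ \ Σ''` (with `ε₀ ≠ 1`) guarantees a digit `≠ 2` on both sides of `0`.
-/

noncomputable def digitExpansion (r : Fin 3 → ℝ) (a : ℕ → Fin 3) : ℝ :=
  ∑' k : ℕ, (∏ i ∈ Finset.range k, r (a i)) * alphaOf r (a k)

section DigitExpansion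

variable {r : Fin 3 → ℝ}

lemma alphaOf_nonneg (hr : ∀ i, 0 ≤ r i) (e : Fin 3) : 0 ≤ alphaOf r e := by
  have := hr 0; have := hr 1
  fin_cases e <;> simp [alphaOf] <;> linarith

lemma alphaOf_add_self_le_one (hr : ∀ i, 0 ≤ r i) (hsum : r 0 + r 1 + r 2 = 1) (e : Fin 3) :
    alphaOf r e + r e ≤ 1 := by
  have := hr 0; have := hr 1; have := hr 2
  fin_cases e <;> simp [alphaOf] <;> linarith

lemma alphaOf_add_self_lt_one (hr : ∀ i, 0 < r i) (hsum : r 0 + r 1 + r 2 = 1) {e : Fin 3}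
    (he : e ≠ 2) : alphaOf r e + r e < 1 := by
  have := hr 1; have := hr 2
  fin_cases e <;> simp [alphaOf] at he ⊢ <;> linarith

lemma sum_range_digits_add_prod_le_one (hr : ∀ i, 0 ≤ r i) (hsum : r 0 + r 1 + r 2 = 1)
    (a : ℕ → Fin 3) (N : ℕ) :
    ∑ k ∈ Finset.range N, (∏ i ∈ Finset.range k, r (a i)) * alphaOf r (a k)
      + ∏ i ∈ Finset.range N, r (a i) ≤ 1 := by
  induction N with
  | zero => simp
  | succ N ih =>
    have hprod : 0 ≤ ∏ i ∈ Finset.range N, r (a i) := Finset.prod_nonneg fun i _ => hr (a i)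
    have hdigit := mul_le_mul_of_nonneg_left (alphaOf_add_self_le_one hr hsum (a N)) hprod
    rw [Finset.sum_range_succ, Finset.prod_range_succ]
    linarith

lemma summable_digits (hr : ∀ i, 0 ≤ r i) (hsum : r 0 + r 1 + r 2 = 1) (a : ℕ → Fin 3) :
    Summable fun k => (∏ i ∈ Finset.range k, r (a i)) * alphaOf r (a k) := by
  refine summable_of_sum_range_le (c := 1)
    (fun k => mul_nonneg (Finset.prod_nonneg fun i _ => hr (a i)) (alphaOf_nonneg hr _))
    fun N => ?_
  have := sum_range_digits_add_prod_le_one hr hsum a N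
  have : 0 ≤ ∏ i ∈ Finset.range N, r (a i) := Finset.prod_nonneg fun i _ => hr (a i)
  linarith

lemma digitExpansion_nonneg (hr : ∀ i, 0 ≤ r i) (a : ℕ → Fin 3) : 0 ≤ digitExpansion r a :=
  tsum_nonneg fun _ => mul_nonneg (Finset.prod_nonneg fun i _ => hr (a i)) (alphaOf_nonneg hr _)

lemma digitExpansion_le_one (hr : ∀ i, 0 ≤ r i) (hsum : r 0 + r 1 + r 2 = 1) (a : ℕ → Fin 3) :
    digitExpansion r a ≤ 1 := by
  refine (summable_digits hr hsum a).tsum_le_of_sum_range_le fun N => ?_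
  have := sum_range_digits_add_prod_le_one hr hsum a N
  have : 0 ≤ ∏ i ∈ Finset.range N, r (a i) := Finset.prod_nonneg fun i _ => hr (a i)
  linarith

lemma digitExpansion_eq_alphaOf_add (hr : ∀ i, 0 ≤ r i) (hsum : r 0 + r 1 + r 2 = 1)
    (a : ℕ → Fin 3) :
    digitExpansion r a = alphaOf r (a 0) + r (a 0) * digitExpansion r (fun k => a (k + 1)) := by
  rw [digitExpansion, (summable_digits hr hsum a).tsum_eq_zero_add, digitExpansion,
    ← tsum_mul_left]
  simp only [Finset.prod_range_zero, one_mul, Finset.prod_range_succ']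
  congr 1
  exact tsum_congr fun k => by ring

lemma digitExpansion_lt_one (hr : ∀ i, 0 < r i) (hsum : r 0 + r 1 + r 2 = 1) (a : ℕ → Fin 3)
    (m : ℕ) (hm : a m ≠ 2) : digitExpansion r a < 1 := by
  have hr' : ∀ i, 0 ≤ r i := fun i => (hr i).le
  induction m generalizing a with
  | zero =>
    have htail := digitExpansion_le_one hr' hsum (fun k => a (k + 1))
    have hfirst := alphaOf_add_self_lt_one hr hsum hm
    have := mul_le_of_le_one_right (hr (a 0)).le htail
    rw [digitExpansion_eq_alphaOf_add hr' hsum]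
    linarith
  | succ m ih =>
    have htail := ih (fun k => a (k + 1)) hm
    have hfirst := alphaOf_add_self_le_one hr' hsum (a 0)
    have := mul_lt_of_lt_one_right (hr (a 0)) htail
    rw [digitExpansion_eq_alphaOf_add hr' hsum]
    linarith

lemma digitExpansion_mem_Ico (hr : ∀ i, 0 < r i) (hsum : r 0 + r 1 + r 2 = 1) (a : ℕ → Fin 3)
    (h : ∃ m, a m ≠ 2) : digitExpansion r a ∈ Set.Ico 0 1 :=
  ⟨digitExpansion_nonneg (fun i => (hr i).le) a,
    h.elim fun m hm => digitExpansion_lt_one hr hsum a m hm⟩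

end DigitExpansion

lemma bakerMap_alphaOf_add {r : Fin 3 → ℝ} (hr : ∀ i, 0 < r i) (e : Fin 3) {x : ℝ}
    (hx : x ∈ Set.Ico 0 1) (y : ℝ) :
    bakerMap r (alphaOf r e + r e * x, y) = (x, r e * y + alphaOf r e) := by
  obtain ⟨hx0, hx1⟩ := hx
  have hlt (i : Fin 3) : r i * x < r i := mul_lt_of_lt_one_right (hr i) hx1
  have hnn (i : Fin 3) : 0 ≤ r i * x := mul_nonneg (hr i).le hx0
  fin_cases e <;> simp [bakerMap, alphaOf, hlt, not_lt.mpr (hnn _), (hr _).ne']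
  intro h
  linarith [hr 1, hnn 2]

lemma codingMap_eq_digitExpansion (r : Fin 3 → ℝ) (ε : ℤ → Fin 3) :
    codingMap r ε = (digitExpansion r fun k => ε k, digitExpansion r fun k => ε (-(k + 1))) :=
  rfl

lemma codingMap_shiftMap_eq_digitExpansion (r : Fin 3 → ℝ) (ε : ℤ → Fin 3) :
    codingMap r (shiftMap ε) =
      (digitExpansion r fun k => ε (k + 1), digitExpansion r fun k => ε (-k)) := by
  have hneg : ∀ n : ℤ, -(n + 1) + 1 = -n := fun n => by ring
  simp only [codingMap, shiftMap, hneg]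
  rfl

lemma exists_ne_two_of_notMem_badSet {ε : ℤ → Fin 3} (hε : ε ∉ badSet) (hε0 : ε 0 ≠ 1) :
    (∃ n : ℕ, ε (n + 1) ≠ 2) ∧ ∃ n : ℕ, ε (-(n + 1)) ≠ 2 := by
  simp only [badSet, Set.mem_union, Set.mem_ofPred_eq, ne_eq, hε0, not_false_eq_true, and_true,
    not_or, not_forall, exists_prop] at hε
  obtain ⟨⟨m, hm, hm2⟩, n, hn, hn2⟩ := hε
  obtain ⟨k, rfl⟩ : ∃ k : ℕ, n = k + 1 := ⟨(n - 1).toNat, by omega⟩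
  obtain ⟨l, rfl⟩ : ∃ l : ℕ, m = -(l + 1) := ⟨(-m - 1).toNat, by omega⟩
  exact ⟨⟨k, hn2⟩, l, hm2⟩

theorem codingMap_semiconjugacy
    (r : Fin 3 → ℝ) (hr : ∀ i, 0 < r i) (hsum : r 0 + r 1 + r 2 = 1)
    (ε : ℤ → Fin 3) (hε : ε ∉ badSet) (hε0 : ε 0 ≠ 1) :
    codingMap r ε ∈ unitSquare ∧ codingMap r (shiftMap ε) ∈ unitSquare ∧
      codingMap r (shiftMap ε) = bakerMap r (codingMap r ε) := by
  have hr' : ∀ i, 0 ≤ r i := fun i => (hr i).le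
  obtain ⟨⟨n, hn⟩, m, hm⟩ := exists_ne_two_of_notMem_badSet hε hε0
  set q' := digitExpansion r fun k => ε (k + 1)
  set p := digitExpansion r fun k => ε (-(k + 1))
  have hq' : q' ∈ Set.Ico 0 1 := digitExpansion_mem_Ico hr hsum _ ⟨n, hn⟩
  have hp : p ∈ Set.Ico 0 1 := digitExpansion_mem_Ico hr hsum _ ⟨m, hm⟩
  have hJ : codingMap r ε = (alphaOf r (ε 0) + r (ε 0) * q', p) := by
    rw [codingMap_eq_digitExpansion, digitExpansion_eq_alphaOf_add hr' hsum]
    push_cast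
    rfl
  have hJshift : codingMap r (shiftMap ε) = (q', r (ε 0) * p + alphaOf r (ε 0)) := by
    rw [codingMap_shiftMap_eq_digitExpansion,
      digitExpansion_eq_alphaOf_add hr' hsum fun k : ℕ => ε (-k), add_comm (alphaOf _ _)]
    push_cast
    rfl
  refine ⟨?_, ?_, ?_⟩
  · rw [codingMap_eq_digitExpansion]
    exact ⟨digitExpansion_mem_Ico hr hsum _ ⟨n + 1, by exact_mod_cast hn⟩, hp⟩
  · rw [codingMap_shiftMap_eq_digitExpansion]
    exact ⟨hq', digitExpansion_mem_Ico hr hsum _ ⟨m + 1, by exact_mod_cast hm⟩⟩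
  · rw [hJ, hJshift, bakerMap_alphaOf_add hr _ hq']
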